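/- In a finite MDP with n states, if d0 is not almost-sure strongly synchronizing in T, then for every strategy σ there exist infinitely many positions i_0 < i_1 < ... with i_0 ≤ n and i_{j+1} − i_j ≤ n, such that M^σ_{i_j}(T) ≤ 1 − ε_s for each j, where ε_s = α0·α^{2n}/n², α the smallest positive transition probability and α0 the smallest positive probability in d0. -/

import Mathlib

open scoped BigOperators
open Classical Filter

/-- A finite Markov decision process with real transition probabilities. -/
structure MDP (Q A : Type) [Fintype Q] [Fintype A] where
  δ : Q → A → Q → ℝ
  δ_nonneg : ∀ q a q', 0 ≤ δ q a q'
  δ_sum : ∀ q a, ∑ q', δ q a q' = 1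

namespace MDP

variable {Q A : Type} [Fintype Q] [Fintype A]

/-- `d` is a probability distribution. -/
def IsDist (d : Q → ℝ) : Prop := (∀ q, 0 ≤ d q) ∧ ∑ q, d q = 1

/-- A (randomized, history-dependent) strategy maps a history (list of past
state-action pairs) and the current state to a distribution over actions. -/
def IsStrategy (σ : List (Q × A) → Q → A → ℝ) : Prop :=
  (∀ h q a, 0 ≤ σ h q a) ∧ ∀ h q, ∑ a, σ h q a = 1

/-- The probability of the finite path `qs` (with actions `as`) of length `i`,
under strategy `σ` from initial distribution `d0`. -/
noncomputable def pathProb (M : MDP Q A) (σ : List (Q × A) → Q → A → ℝ)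
    (d0 : Q → ℝ) (i : ℕ) (qs : Fin (i + 1) → Q) (as : Fin i → A) : ℝ :=
  d0 (qs 0) * ∏ j : Fin i,
    (σ (List.ofFn (fun k : Fin j.val =>
          (qs ⟨k.val, by have := k.isLt; have := j.isLt; omega⟩,
           as ⟨k.val, by have := k.isLt; have := j.isLt; omega⟩)))
        (qs j.castSucc) (as j))
      * M.δ (qs j.castSucc) (as j) (qs j.succ)

/-- The distribution over states after `i` steps (`M^σ_i`). -/
noncomputable def stepDist (M : MDP Q A) (σ : List (Q × A) → Q → A → ℝ)
    (d0 : Q → ℝ) (i : ℕ) (q : Q) : ℝ :=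
  ∑ qs : Fin (i + 1) → Q, ∑ as : Fin i → A,
    if qs (Fin.last i) = q then M.pathProb σ d0 i qs as else 0

/-- The probability mass that a (sub)distribution assigns to a set `T`. -/
noncomputable def mass (d : Q → ℝ) (T : Set Q) : ℝ := ∑ q, T.indicator d q

/-- The support of a (sub)distribution. -/
def supp {α : Type} (d : α → ℝ) : Set α := {q | 0 < d q}

/-- One-step sure predecessors of `Y`. -/
def Pre (M : MDP Q A) (Y : Set Q) : Set Q :=
  {q | ∃ a, ∀ q', 0 < M.δ q a q' → q' ∈ Y}

/-- Probability of reaching `T` within `i` steps. -/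
noncomputable def reachProb (M : MDP Q A) (σ : List (Q × A) → Q → A → ℝ)
    (d0 : Q → ℝ) (T : Set Q) (i : ℕ) : ℝ :=
  ∑ qs : Fin (i + 1) → Q, ∑ as : Fin i → A,
    if ∃ j, qs j ∈ T then M.pathProb σ d0 i qs as else 0

/-- `d0` is almost-sure winning for the reachability objective `◇T`:
some strategy reaches `T` with probability one. -/
def ASReach (M : MDP Q A) (d0 : Q → ℝ) (T : Set Q) : Prop :=
  ∃ σ, IsStrategy σ ∧ (⨆ i : ℕ, M.reachProb σ d0 T i) = 1

/-- `d0` is limit-sure eventually synchronizing in `T`. -/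
def LimitSureEventually (M : MDP Q A) (d0 : Q → ℝ) (T : Set Q) : Prop :=
  ∀ ε > (0 : ℝ), ∃ σ, IsStrategy σ ∧ ∃ i, 1 - ε ≤ mass (M.stepDist σ d0 i) T

/-- `d0` is almost-sure weakly synchronizing in `T`. -/
def ASWeakly (M : MDP Q A) (d0 : Q → ℝ) (T : Set Q) : Prop :=
  ∃ σ, IsStrategy σ ∧ ∀ ε > (0 : ℝ), {i : ℕ | 1 - ε ≤ mass (M.stepDist σ d0 i) T}.Infinite

/-- `d0` is almost-sure strongly synchronizing in `T`. -/
def ASStrongly (M : MDP Q A) (d0 : Q → ℝ) (T : Set Q) : Prop :=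
  ∃ σ, IsStrategy σ ∧ ∀ ε > (0 : ℝ), ∃ N, ∀ i ≥ N, 1 - ε ≤ mass (M.stepDist σ d0 i) T

/-- The uniform distribution on a set `S`. -/
noncomputable def uniformOn (S : Set Q) : Q → ℝ :=
  fun q => if q ∈ S then 1 / (S.ncard : ℝ) else 0

/-- The uniform strategy, playing all actions uniformly at random. -/
noncomputable def uniformStrategy (Q A : Type) [Fintype A] :
    List (Q × A) → Q → A → ℝ :=
  fun _ _ _ => 1 / (Fintype.card A : ℝ)

/-- Action `a` is allowed in `q` w.r.t. `S` if all its successors stay in `S`. -/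
def Allowed (M : MDP Q A) (S : Set Q) (q : Q) (a : A) : Prop :=
  ∀ q', 0 < M.δ q a q' → q' ∈ S

/-- Edge relation within `S` given the allowed actions. -/
def ECEdge (M : MDP Q A) (S : Set Q) (q q' : Q) : Prop :=
  q ∈ S ∧ q' ∈ S ∧ ∃ a, M.Allowed S q a ∧ 0 < M.δ q a q'

/-- `S` is an end-component: closed and strongly connected via allowed actions. -/
def IsEC (M : MDP Q A) (S : Set Q) : Prop :=
  (∀ q ∈ S, ∃ a, M.Allowed S q a) ∧
  ∀ q ∈ S, ∀ q' ∈ S, Relation.ReflTransGen (M.ECEdge S) q q'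

/-- The union of all end-components. -/
def ECUnion (M : MDP Q A) : Set Q := ⋃₀ {S | M.IsEC S}

/-- Positive always synchronizing in `T`. -/
def PosAlways (M : MDP Q A) (d0 : Q → ℝ) (T : Set Q) : Prop :=
  ∃ σ, IsStrategy σ ∧ ∀ i, 0 < mass (M.stepDist σ d0 i) T

/-- Positive eventually synchronizing in `T`. -/
def PosEvent (M : MDP Q A) (d0 : Q → ℝ) (T : Set Q) : Prop :=
  ∃ σ, IsStrategy σ ∧ ∃ i, 0 < mass (M.stepDist σ d0 i) T

/-- Positive weakly synchronizing in `T`. -/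
def PosWeakly (M : MDP Q A) (d0 : Q → ℝ) (T : Set Q) : Prop :=
  ∃ σ, IsStrategy σ ∧ ∀ N, ∃ i ≥ N, 0 < mass (M.stepDist σ d0 i) T

/-- Positive strongly synchronizing in `T`. -/
def PosStrongly (M : MDP Q A) (d0 : Q → ℝ) (T : Set Q) : Prop :=
  ∃ σ, IsStrategy σ ∧ ∃ N, ∀ i ≥ N, 0 < mass (M.stepDist σ d0 i) T

/-- Bounded always synchronizing in `T`. -/
def BndAlways (M : MDP Q A) (d0 : Q → ℝ) (T : Set Q) : Prop :=
  ∃ σ, IsStrategy σ ∧ ∃ ε > (0 : ℝ), ∀ i, ε < mass (M.stepDist σ d0 i) T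

/-- Bounded eventually synchronizing in `T`. -/
def BndEvent (M : MDP Q A) (d0 : Q → ℝ) (T : Set Q) : Prop :=
  ∃ σ, IsStrategy σ ∧ ∃ ε > (0 : ℝ), ∃ i, ε < mass (M.stepDist σ d0 i) T

/-- Bounded weakly synchronizing in `T`. -/
def BndWeakly (M : MDP Q A) (d0 : Q → ℝ) (T : Set Q) : Prop :=
  ∃ σ, IsStrategy σ ∧ ∃ ε > (0 : ℝ), ∀ N, ∃ i ≥ N, ε < mass (M.stepDist σ d0 i) T

/-- Bounded strongly synchronizing in `T`. -/
def BndStrongly (M : MDP Q A) (d0 : Q → ℝ) (T : Set Q) : Prop :=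
  ∃ σ, IsStrategy σ ∧ ∃ ε > (0 : ℝ), ∃ N, ∀ i ≥ N, ε < mass (M.stepDist σ d0 i) T

end MDP

/-!
Let `S = safeRegion T`, the sure winning region of `□T`, and `W = asRegion T`, the almost-sure
winning region of `◇S`, computed by the nested fixpoint `νZ. μY. S ∪ progress Z Y`.

If the support of `d0` lies in `W`, the memoryless strategy that stays in `S` once there and
otherwise makes progress towards `S` inside `W` misses `S` after `k n` steps with probability at
most `(1 - α ^ n) ^ k`, so `d0` is almost-sure strongly synchronizing in `T`.

Otherwise some `q0 ∉ W` has `d0 q0 ≥ α0`. Outside `W` the potential `α ^ level` is superharmonic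
under every action, so whatever the strategy, a mass of at least `α0 α ^ (n - 1)` stays outside
`W ⊇ S` at every step. From outside `S` every strategy leaves `T` within `n - 1` steps with
probability at least `α ^ (n - 1)`. Hence in each window of `n` consecutive steps the masses
outside `T` add up to at least `α0 α ^ (2n - 2)`, and one of them is at least
`α0 α ^ (2n - 2) / n ≥ ε_s`.
-/

namespace Set

variable {Q : Type} [Fintype Q]

lemma exists_le_card_sub_ncard_succ_eq {F : ℕ → Set Q} (hF : Monotone F) :
    ∃ j ≤ Fintype.card Q - (F 0).ncard, F (j + 1) = F j := by
  by_contra! hne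
  have hgrow : ∀ j ≤ Fintype.card Q - (F 0).ncard + 1, (F 0).ncard + j ≤ (F j).ncard := by
    intro j hj
    induction j with
    | zero => simp
    | succ j ih =>
      have := ncard_lt_ncard ((hF (Nat.le_add_right j 1)).ssubset_of_ne (hne j (by omega)).symm)
      have := ih (by omega)
      omega
  have := hgrow _ le_rfl
  have := ncard_le_card (F (Fintype.card Q - (F 0).ncard + 1))
  have := ncard_le_card (F 0)
  rw [Nat.card_eq_fintype_card] at *
  omega

lemma exists_le_card_succ_eq {F : ℕ → Set Q} (hF : Antitone F) :
    ∃ j ≤ Fintype.card Q, F (j + 1) = F j := by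
  obtain ⟨j, hj, h⟩ := exists_le_card_sub_ncard_succ_eq (F := fun k => (F k)ᶜ)
    fun _ _ hkl => compl_subset_compl.mpr (hF hkl)
  exact ⟨j, hj.trans (Nat.sub_le _ _), compl_inj_iff.mp h⟩

end Set

lemma eq_of_iterate_succ_eq {α : Type*} {F : ℕ → α} {H : α → α} (hF : ∀ k, F (k + 1) = H (F k))
    {j : ℕ} (hj : F (j + 1) = F j) {l : ℕ} (hl : j ≤ l) : F l = F j := by
  induction l, hl using Nat.le_induction with
  | base => rfl
  | succ l _ ih => rw [hF, ih, ← hF, hj]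

lemma exists_strictMono_of_forall_exists_lt {P : ℕ → Prop} {n : ℕ}
    (h : ∀ k, ∃ s < n, P (k + s)) :
    ∃ f : ℕ → ℕ, StrictMono f ∧ f 0 < n ∧ (∀ j, f (j + 1) - f j ≤ n) ∧ ∀ j, P (f j) := by
  choose g hgn hP using h
  let f : ℕ → ℕ := fun j => Nat.rec (g 0) (fun _ p => p + 1 + g (p + 1)) j
  have hf (j : ℕ) : f (j + 1) = f j + 1 + g (f j + 1) := rfl
  refine ⟨f, strictMono_nat_of_lt_succ fun j => by rw [hf]; omega, hgn 0, fun j => ?_, fun j => ?_⟩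
  · have := hgn (f j + 1)
    rw [hf]
    omega
  · cases j with
    | zero => simpa [f] using hP 0
    | succ j => exact hf j ▸ hP (f j + 1)

namespace MDP

variable {Q A : Type}

def history {i : ℕ} (qs : Fin (i + 1) → Q) (as : Fin i → A) : List (Q × A) :=
  List.ofFn fun k => (qs k.castSucc, as k)

noncomputable def pureStrategy (f : Q → A) : List (Q × A) → Q → A → ℝ :=
  fun _ q a => if a = f q then 1 else 0

lemma isStrategy_pureStrategy [Fintype A] (f : Q → A) : IsStrategy (pureStrategy f) :=
  ⟨fun _ _ _ => by unfold pureStrategy; split_ifs <;> norm_num, fun _ _ => by simp [pureStrategy]⟩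

lemma eq_of_pureStrategy_pos {f : Q → A} {h : List (Q × A)} {q : Q} {a : A}
    (ha : 0 < pureStrategy f h q a) : a = f q := by
  by_contra hne
  simp [pureStrategy, hne] at ha

variable [Fintype Q] [Fintype A]

lemma pathProb_snoc (M : MDP Q A) (σ : List (Q × A) → Q → A → ℝ) (d0 : Q → ℝ)
    (i : ℕ) (qs : Fin (i + 1) → Q) (as : Fin i → A) (z : Q) (b : A) :
    M.pathProb σ d0 (i + 1) (Fin.snoc qs z) (Fin.snoc as b) =
      M.pathProb σ d0 i qs as *
        (σ (history qs as) (qs (Fin.last i)) b * M.δ (qs (Fin.last i)) b z) := by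
  have hq : ∀ (k : ℕ) (hk : k < i + 1) h, (Fin.snoc qs z : Fin (i + 2) → Q) ⟨k, h⟩ = qs ⟨k, hk⟩ :=
    fun k hk _ => Fin.snoc_castSucc (α := fun _ => Q) z qs ⟨k, hk⟩
  have ha : ∀ (k : ℕ) (hk : k < i) h, (Fin.snoc as b : Fin (i + 1) → A) ⟨k, h⟩ = as ⟨k, hk⟩ :=
    fun k hk _ => Fin.snoc_castSucc (α := fun _ => A) b as ⟨k, hk⟩
  simp only [pathProb, Fin.prod_univ_castSucc, mul_assoc, Fin.snoc_castSucc, Fin.snoc_last,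
    Fin.succ_last, Fin.succ_castSucc, ← Fin.castSucc_zero]
  simp (disch := omega) only [hq, ha]
  rfl

lemma δ_le_one (M : MDP Q A) (q : Q) (a : A) (q' : Q) : M.δ q a q' ≤ 1 :=
  M.δ_sum q a ▸ Finset.single_le_sum (fun r _ => M.δ_nonneg q a r) (Finset.mem_univ q')

lemma pathProb_nonneg (M : MDP Q A) {σ : List (Q × A) → Q → A → ℝ} {d0 : Q → ℝ}
    (hσ : IsStrategy σ) (hd0 : ∀ q, 0 ≤ d0 q) (i : ℕ) (qs : Fin (i + 1) → Q) (as : Fin i → A) :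
    0 ≤ M.pathProb σ d0 i qs as :=
  mul_nonneg (hd0 _) <| Finset.prod_nonneg fun _ _ => mul_nonneg (hσ.1 _ _ _) (M.δ_nonneg _ _ _)

lemma stepDist_nonneg (M : MDP Q A) {σ : List (Q × A) → Q → A → ℝ} {d0 : Q → ℝ}
    (hσ : IsStrategy σ) (hd0 : ∀ q, 0 ≤ d0 q) (i : ℕ) (q : Q) :
    0 ≤ M.stepDist σ d0 i q :=
  Finset.sum_nonneg fun qs _ => Finset.sum_nonneg fun as _ => by
    split_ifs
    exacts [M.pathProb_nonneg hσ hd0 i qs as, le_rfl]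

@[simp]
lemma stepDist_zero (M : MDP Q A) (σ : List (Q × A) → Q → A → ℝ) (d0 : Q → ℝ) :
    M.stepDist σ d0 0 = d0 := by
  ext q
  rw [stepDist, ← (Equiv.funUnique (Fin 1) Q).symm.sum_comp]
  simp [pathProb, Fin.last]

lemma stepDist_dotProduct (M : MDP Q A) (σ : List (Q × A) → Q → A → ℝ) (d0 : Q → ℝ)
    (i : ℕ) (w : Q → ℝ) :
    M.stepDist σ d0 i ⬝ᵥ w =
      ∑ qs : Fin (i + 1) → Q, ∑ as : Fin i → A, M.pathProb σ d0 i qs as * w (qs (Fin.last i)) := by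
  simp only [dotProduct, stepDist, Finset.sum_mul, ite_mul, zero_mul]
  rw [Finset.sum_comm]
  refine Finset.sum_congr rfl fun qs _ => ?_
  rw [Finset.sum_comm]
  simp

lemma stepDist_succ_dotProduct (M : MDP Q A) (σ : List (Q × A) → Q → A → ℝ) (d0 : Q → ℝ)
    (i : ℕ) (w : Q → ℝ) :
    M.stepDist σ d0 (i + 1) ⬝ᵥ w =
      ∑ qs : Fin (i + 1) → Q, ∑ as : Fin i → A, M.pathProb σ d0 i qs as *
        ∑ b, σ (history qs as) (qs (Fin.last i)) b * (M.δ (qs (Fin.last i)) b ⬝ᵥ w) := by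
  rw [stepDist_dotProduct, ← (Fin.snocEquiv fun _ => Q).sum_comp, Fintype.sum_prod_type,
    Finset.sum_comm]
  refine Finset.sum_congr rfl fun qs _ => ?_
  have hQ (z : Q) : (Fin.snocEquiv fun _ => Q) (z, qs) = Fin.snoc qs z := rfl
  have hA (b : A) (as : Fin i → A) : (Fin.snocEquiv fun _ => A) (b, as) = Fin.snoc as b := rfl
  simp only [← (Fin.snocEquiv fun _ => A).sum_comp, Fintype.sum_prod_type, hQ, hA,
    pathProb_snoc, Fin.snoc_last, dotProduct, Finset.mul_sum, mul_assoc]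
  rw [Finset.sum_comm]
  conv_rhs => rw [Finset.sum_comm]
  exact Finset.sum_congr rfl fun b _ => Finset.sum_comm

lemma sum_stepDist (M : MDP Q A) {σ : List (Q × A) → Q → A → ℝ} {d0 : Q → ℝ}
    (hσ : IsStrategy σ) (hd0 : IsDist d0) (i : ℕ) : ∑ q, M.stepDist σ d0 i q = 1 := by
  induction i with
  | zero => simpa using hd0.2
  | succ i ih =>
    have hδ (q : Q) (b : A) : M.δ q b ⬝ᵥ 1 = 1 := by rw [dotProduct_one, M.δ_sum]
    rw [← dotProduct_one, stepDist_dotProduct] at ih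
    rw [← dotProduct_one, stepDist_succ_dotProduct]
    simpa [hδ, hσ.2] using ih

lemma stepDist_dotProduct_le_succ (M : MDP Q A) {σ : List (Q × A) → Q → A → ℝ} {d0 : Q → ℝ}
    (hσ : IsStrategy σ) (hd0 : ∀ q, 0 ≤ d0 q) {u w : Q → ℝ}
    (huw : ∀ h q a, 0 < σ h q a → u q ≤ M.δ q a ⬝ᵥ w) (i : ℕ) :
    M.stepDist σ d0 i ⬝ᵥ u ≤ M.stepDist σ d0 (i + 1) ⬝ᵥ w := by
  rw [stepDist_dotProduct, stepDist_succ_dotProduct]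
  refine Finset.sum_le_sum fun qs _ => Finset.sum_le_sum fun as _ =>
    mul_le_mul_of_nonneg_left ?_ (M.pathProb_nonneg hσ hd0 i qs as)
  set h := history qs as
  set q := qs (Fin.last i)
  calc u q = ∑ b, σ h q b * u q := by rw [← Finset.sum_mul, hσ.2, one_mul]
    _ ≤ ∑ b, σ h q b * (M.δ q b ⬝ᵥ w) := Finset.sum_le_sum fun b _ => by
      rcases (hσ.1 h q b).eq_or_lt with hb | hb
      · simp [← hb]
      · exact mul_le_mul_of_nonneg_left (huw h q b hb) hb.le

lemma dotProduct_le_stepDist_dotProduct (M : MDP Q A) {σ : List (Q × A) → Q → A → ℝ}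
    {d0 : Q → ℝ} (hσ : IsStrategy σ) (hd0 : ∀ q, 0 ≤ d0 q) {u : ℕ → Q → ℝ} {i : ℕ}
    (hu : ∀ t < i, ∀ h q a, 0 < σ h q a → u t q ≤ M.δ q a ⬝ᵥ u (t + 1)) :
    d0 ⬝ᵥ u 0 ≤ M.stepDist σ d0 i ⬝ᵥ u i := by
  induction i with
  | zero => simp
  | succ i ih =>
    exact (ih fun t ht => hu t (by omega)).trans
      (M.stepDist_dotProduct_le_succ hσ hd0 (hu i i.lt_succ_self) i)

lemma mass_eq_dotProduct (d : Q → ℝ) (T : Set Q) : mass d T = d ⬝ᵥ T.indicator 1 := by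
  refine Finset.sum_congr rfl fun q _ => ?_
  simp [Set.indicator_apply]

lemma mass_mono {d : Q → ℝ} (hd : ∀ q, 0 ≤ d q) {X Y : Set Q} (hXY : X ⊆ Y) :
    mass d X ≤ mass d Y :=
  Finset.sum_le_sum fun q _ => Set.indicator_le_indicator_of_subset hXY hd q

lemma mass_nonneg {d : Q → ℝ} (hd : ∀ q, 0 ≤ d q) (X : Set Q) : 0 ≤ mass d X :=
  Finset.sum_nonneg fun q _ => Set.indicator_nonneg (fun q _ => hd q) q

lemma mass_add_mass_compl (d : Q → ℝ) (X : Set Q) : mass d X + mass d Xᶜ = ∑ q, d q := by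
  simp only [mass, ← Finset.sum_add_distrib, Set.indicator_self_add_compl_apply]

variable {M : MDP Q A} {T : Set Q} {σ : List (Q × A) → Q → A → ℝ} {d0 : Q → ℝ} {α : ℝ}

def IsSafe (M : MDP Q A) (T X : Set Q) : Prop := X ⊆ T ∧ X ⊆ M.Pre X

/-- The sure winning region of the safety objective `□T`. -/
def safeRegion (M : MDP Q A) (T : Set Q) : Set Q := ⋃₀ {X | M.IsSafe T X}

lemma IsSafe.subset_safeRegion {X : Set Q} (h : M.IsSafe T X) :
    X ⊆ M.safeRegion T :=
  Set.subset_sUnion_of_mem h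

lemma safeRegion_subset : M.safeRegion T ⊆ T :=
  Set.sUnion_subset fun _ hX => hX.1

lemma safeRegion_subset_pre : M.safeRegion T ⊆ M.Pre (M.safeRegion T) := by
  rintro q ⟨X, hX, hq⟩
  obtain ⟨a, ha⟩ := hX.2 hq
  exact ⟨a, fun q' hq' => hX.subset_safeRegion (ha q' hq')⟩

/-- States from which, whatever the actions, `T` is left within `j` steps with positive
probability. -/
def exitWithin (M : MDP Q A) (T : Set Q) : ℕ → Set Q
  | 0 => Tᶜ
  | j + 1 => M.exitWithin T j ∪ {q | ∀ a, ∃ q', 0 < M.δ q a q' ∧ q' ∈ M.exitWithin T j}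

lemma exitWithin_monotone : Monotone (M.exitWithin T) :=
  monotone_nat_of_le_succ fun _ => Set.subset_union_left

lemma compl_safeRegion_subset_exitWithin [Nonempty A] :
    (M.safeRegion T)ᶜ ⊆ M.exitWithin T (Fintype.card Q - 1) := by
  rcases Tᶜ.eq_empty_or_nonempty with hT | hT
  · have hsafe : M.IsSafe T Set.univ :=
      ⟨fun q _ => by_contra fun hq => hT.subset hq,
        fun _ _ => ⟨Classical.arbitrary A, fun _ _ => trivial⟩⟩
    exact fun q hq => absurd (hsafe.subset_safeRegion (Set.mem_univ q)) hq
  obtain ⟨j, hj, hstab⟩ :=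
    Set.exists_le_card_sub_ncard_succ_eq (exitWithin_monotone (M := M) (T := T))
  have hj' : j ≤ Fintype.card Q - 1 := hj.trans (Nat.sub_le_sub_left
    ((Set.ncard_pos).mpr hT) _)
  -- once the iteration is stable, its complement is a trap inside `T`
  have hsafe : M.IsSafe T (M.exitWithin T j)ᶜ := by
    refine ⟨fun q hq => by_contra fun hqT => hq (exitWithin_monotone j.zero_le hqT),
      fun q hq => ?_⟩
    rw [← hstab] at hq
    have hq : ¬ ∀ a, ∃ q', 0 < M.δ q a q' ∧ q' ∈ M.exitWithin T j := fun h => hq (Or.inr h)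
    push Not at hq
    exact hq
  exact fun q hq => by_contra fun hq' =>
    hq (hsafe.subset_safeRegion fun hqj => hq' (exitWithin_monotone hj' hqj))

lemma exists_mem_exitWithin_of_mem_succ {j : ℕ} {q : Q} (hq : q ∈ M.exitWithin T (j + 1))
    (hqT : q ∈ T) (a : A) :
    ∃ q', 0 < M.δ q a q' ∧ q' ∈ M.exitWithin T j := by
  induction j with
  | zero =>
    rcases hq with h | h
    · exact absurd hqT h
    · exact h a
  | succ j ih =>
    rcases hq with h | h
    · obtain ⟨q', h1, h2⟩ := ih h
      exact ⟨q', h1, exitWithin_monotone j.le_succ h2⟩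
    · exact h a

def progress (M : MDP Q A) (Z Y : Set Q) : Set Q :=
  {q | ∃ a, (∀ q', 0 < M.δ q a q' → q' ∈ Z) ∧ ∃ q', 0 < M.δ q a q' ∧ q' ∈ Y}

def reachIter (M : MDP Q A) (T Z : Set Q) : ℕ → Set Q
  | 0 => M.safeRegion T
  | r + 1 => M.reachIter T Z r ∪ M.progress Z (M.reachIter T Z r)

/-- The outer iteration of the nested fixpoint `νZ. μY. safeRegion ∪ progress Z Y`. -/
def asIter (M : MDP Q A) (T : Set Q) : ℕ → Set Q
  | 0 => Set.univ
  | k + 1 => M.asIter T k ∩ M.reachIter T (M.asIter T k) (Fintype.card Q)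

/-- The almost-sure winning region of the reachability objective `◇ safeRegion`. -/
def asRegion (M : MDP Q A) (T : Set Q) : Set Q := M.asIter T (Fintype.card Q)

lemma reachIter_monotone (Z : Set Q) : Monotone (M.reachIter T Z) :=
  monotone_nat_of_le_succ fun _ => Set.subset_union_left

lemma reachIter_eq_of_card_le (Z : Set Q) {r : ℕ} (hr : Fintype.card Q ≤ r) :
    M.reachIter T Z r = M.reachIter T Z (Fintype.card Q) := by
  obtain ⟨j, hj, hstab⟩ :=
    Set.exists_le_card_sub_ncard_succ_eq (reachIter_monotone (M := M) (T := T) Z)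
  have h {l : ℕ} (hl : j ≤ l) : M.reachIter T Z l = M.reachIter T Z j :=
    eq_of_iterate_succ_eq (H := fun X => X ∪ M.progress Z X) (fun _ => rfl) hstab hl
  rw [h (l := r) (by omega), h (l := Fintype.card Q) (by omega)]

lemma asIter_antitone : Antitone (M.asIter T) :=
  antitone_nat_of_succ_le fun _ => Set.inter_subset_left

lemma asRegion_subset_asIter {k : ℕ} (hk : k ≤ Fintype.card Q) : M.asRegion T ⊆ M.asIter T k :=
  asIter_antitone hk

lemma asRegion_subset_reachIter : M.asRegion T ⊆ M.reachIter T (M.asRegion T) (Fintype.card Q) := by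
  obtain ⟨j, hj, hstab⟩ := Set.exists_le_card_succ_eq (asIter_antitone (M := M) (T := T))
  have h {l : ℕ} (hl : j ≤ l) : M.asIter T l = M.asIter T j :=
    eq_of_iterate_succ_eq (H := fun X => X ∩ M.reachIter T X (Fintype.card Q)) (fun _ => rfl)
      hstab hl
  intro q hq
  have hq1 : q ∈ M.asIter T (Fintype.card Q + 1) := by
    rwa [h (by omega), ← h (l := Fintype.card Q) hj]
  exact hq1.2

lemma safeRegion_subset_asRegion : M.safeRegion T ⊆ M.asRegion T := by
  suffices ∀ k, M.safeRegion T ⊆ M.asIter T k from this _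
  intro k
  induction k with
  | zero => exact Set.subset_univ _
  | succ k ih => exact Set.subset_inter ih (reachIter_monotone _ (Nat.zero_le _))

/-- The last stage of `asIter` containing `q` (meaningful for `q ∉ asRegion`). -/
noncomputable def level (M : MDP Q A) (T : Set Q) (q : Q) : ℕ := sInf {k | q ∉ M.asIter T (k + 1)}

lemma level_le {q : Q} {k : ℕ} (h : q ∉ M.asIter T (k + 1)) : M.level T q ≤ k :=
  Nat.sInf_le h

lemma level_spec {q : Q} (hq : q ∉ M.asRegion T) :
    q ∈ M.asIter T (M.level T q) ∧ q ∉ M.asIter T (M.level T q + 1) ∧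
      M.level T q < Fintype.card Q := by
  have hcard : 0 < Fintype.card Q := Fintype.card_pos_iff.mpr ⟨q⟩
  have hne : (Fintype.card Q - 1) ∈ {k | q ∉ M.asIter T (k + 1)} := by
    simpa [Nat.sub_add_cancel hcard, asRegion] using hq
  refine ⟨?_, Nat.sInf_mem ⟨_, hne⟩, (level_le hne).trans_lt (by omega)⟩
  rcases h : M.level T q with _ | l
  · exact Set.mem_univ q
  · have := Nat.notMem_of_lt_sInf (s := {k | q ∉ M.asIter T (k + 1)}) (m := l)
      (by unfold level at h; omega)
    simpa using this

lemma level_step {q : Q} (hq : q ∉ M.asRegion T) (a : A) :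
    (∃ q', 0 < M.δ q a q' ∧ q' ∉ M.asRegion T ∧ M.level T q' < M.level T q) ∨
      ∀ q', 0 < M.δ q a q' → q' ∉ M.asRegion T ∧ M.level T q' ≤ M.level T q := by
  obtain ⟨hmem, hnot, hlt⟩ := level_spec hq
  set k := M.level T q
  by_cases hstay : ∀ q', 0 < M.δ q a q' → q' ∈ M.asIter T k
  · right
    intro q' hδ
    have hq' : q' ∉ M.reachIter T (M.asIter T k) (Fintype.card Q) := by
      intro hq'
      refine hnot ⟨hmem, ?_⟩
      rw [← reachIter_eq_of_card_le _ (Nat.le_succ _)]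
      exact Or.inr ⟨a, hstay, q', hδ, hq'⟩
    have hq'k : q' ∉ M.asIter T (k + 1) := fun h => hq' h.2
    exact ⟨fun h => hq'k (asRegion_subset_asIter hlt h), level_le hq'k⟩
  · left
    push Not at hstay
    obtain ⟨q', hδ, hq'⟩ := hstay
    obtain ⟨l, hl⟩ : ∃ l, k = l + 1 := Nat.exists_eq_succ_of_ne_zero fun h0 => by
      rw [h0] at hq'
      exact hq' (Set.mem_univ q')
    rw [hl] at hq'
    exact ⟨q', hδ, fun h => hq' (asRegion_subset_asIter (by omega) h), by
      have := level_le hq'; omega⟩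

noncomputable def potential (M : MDP Q A) (T : Set Q) (α : ℝ) (q : Q) : ℝ :=
  if q ∈ M.asRegion T then 0 else α ^ M.level T q

lemma potential_nonneg (h0 : 0 ≤ α) (q : Q) : 0 ≤ M.potential T α q := by
  unfold potential
  split_ifs
  exacts [le_rfl, pow_nonneg h0 _]

lemma potential_le_dotProduct (h0 : 0 ≤ α) (h1 : α ≤ 1)
    (hα : ∀ q a q', 0 < M.δ q a q' → α ≤ M.δ q a q') (q : Q) (a : A) :
    M.potential T α q ≤ M.δ q a ⬝ᵥ M.potential T α := by
  have hterm_nonneg : ∀ r, 0 ≤ M.δ q a r * M.potential T α r :=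
    fun r => mul_nonneg (M.δ_nonneg q a r) (potential_nonneg h0 r)
  by_cases hq : q ∈ M.asRegion T
  · rw [potential, if_pos hq]
    exact Finset.sum_nonneg fun r _ => hterm_nonneg r
  rw [potential, if_neg hq]
  rcases level_step hq a with ⟨q', hδ, hq', hlt⟩ | hall
  · calc α ^ M.level T q ≤ α * α ^ M.level T q' := by
          rw [← pow_succ']
          exact pow_le_pow_of_le_one h0 h1 hlt
      _ ≤ M.δ q a q' * M.potential T α q' := by
          rw [potential, if_neg hq']
          exact mul_le_mul_of_nonneg_right (hα q a q' hδ) (pow_nonneg h0 _)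
      _ ≤ M.δ q a ⬝ᵥ M.potential T α :=
          Finset.single_le_sum (fun r _ => hterm_nonneg r) (Finset.mem_univ q')
  · calc α ^ M.level T q = ∑ q', M.δ q a q' * α ^ M.level T q := by
          rw [← Finset.sum_mul, M.δ_sum, one_mul]
      _ ≤ M.δ q a ⬝ᵥ M.potential T α := Finset.sum_le_sum fun q' _ => by
          rcases (M.δ_nonneg q a q').eq_or_lt with hδ | hδ
          · simp [← hδ]
          obtain ⟨hq', hle⟩ := hall q' hδ
          rw [potential, if_neg hq']
          exact mul_le_mul_of_nonneg_left (pow_le_pow_of_le_one h0 h1 hle) hδ.le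

lemma mul_pow_le_mass_compl_asRegion (h0 : 0 ≤ α) (h1 : α ≤ 1)
    (hα : ∀ q a q', 0 < M.δ q a q' → α ≤ M.δ q a q') (hσ : IsStrategy σ) (hd0 : ∀ q, 0 ≤ d0 q)
    {q0 : Q} (hq0 : q0 ∉ M.asRegion T) (i : ℕ) :
    d0 q0 * α ^ (Fintype.card Q - 1) ≤ mass (M.stepDist σ d0 i) (M.asRegion T)ᶜ := by
  have hlevel : M.level T q0 ≤ Fintype.card Q - 1 := by
    have := (level_spec hq0).2.2
    omega
  calc d0 q0 * α ^ (Fintype.card Q - 1) ≤ d0 q0 * M.potential T α q0 := by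
        rw [potential, if_neg hq0]
        exact mul_le_mul_of_nonneg_left (pow_le_pow_of_le_one h0 h1 hlevel) (hd0 q0)
    _ ≤ d0 ⬝ᵥ M.potential T α :=
        Finset.single_le_sum (fun q _ => mul_nonneg (hd0 q) (potential_nonneg h0 q))
          (Finset.mem_univ q0)
    _ ≤ M.stepDist σ d0 i ⬝ᵥ M.potential T α :=
        M.dotProduct_le_stepDist_dotProduct (u := fun _ => M.potential T α) hσ hd0
          fun _ _ _ q a _ => potential_le_dotProduct h0 h1 hα q a
    _ ≤ mass (M.stepDist σ d0 i) (M.asRegion T)ᶜ := by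
        rw [mass_eq_dotProduct]
        refine Finset.sum_le_sum fun q _ => mul_le_mul_of_nonneg_left ?_
          (M.stepDist_nonneg hσ hd0 i q)
        unfold potential
        split_ifs with hq
        · exact Set.indicator_nonneg (fun _ _ => zero_le_one) q
        · simpa [hq] using pow_le_one₀ h0 h1

lemma mul_mass_exitWithin_succ_le (h1 : α ≤ 1) (hα : ∀ q a q', 0 < M.δ q a q' → α ≤ M.δ q a q')
    (hσ : IsStrategy σ) (hd0 : ∀ q, 0 ≤ d0 q) (j i : ℕ) :
    α * mass (M.stepDist σ d0 i) (M.exitWithin T (j + 1)) ≤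
      mass (M.stepDist σ d0 (i + 1)) (M.exitWithin T j) + mass (M.stepDist σ d0 i) Tᶜ := by
  set u : Q → ℝ := fun q => α * (M.exitWithin T (j + 1)).indicator 1 q - Tᶜ.indicator 1 q
  have hterm_nonneg (q : Q) (a : A) (r : Q) : 0 ≤ M.δ q a r * (M.exitWithin T j).indicator 1 r :=
    mul_nonneg (M.δ_nonneg q a r) (Set.indicator_nonneg (fun _ _ => zero_le_one) r)
  have hsum_nonneg (q : Q) (a : A) : 0 ≤ M.δ q a ⬝ᵥ (M.exitWithin T j).indicator 1 :=
    Finset.sum_nonneg fun r _ => hterm_nonneg q a r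
  have hu (q : Q) (a : A) : u q ≤ M.δ q a ⬝ᵥ (M.exitWithin T j).indicator 1 := by
    by_cases hqT : q ∈ T
    · by_cases hq : q ∈ M.exitWithin T (j + 1)
      · obtain ⟨q', hδ, hq'⟩ := exists_mem_exitWithin_of_mem_succ hq hqT a
        calc u q = α := by simp [u, hq, hqT]
          _ ≤ M.δ q a q' * (M.exitWithin T j).indicator 1 q' := by simpa [hq'] using hα q a q' hδ
          _ ≤ _ := Finset.single_le_sum (fun r _ => hterm_nonneg q a r) (Finset.mem_univ q')
      · simpa [u, hq, hqT] using hsum_nonneg q a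
    · have : u q ≤ 0 := by
        by_cases hq : q ∈ M.exitWithin T (j + 1) <;> simp [u, hq, hqT, h1]
      linarith [hsum_nonneg q a]
  have hstep := M.stepDist_dotProduct_le_succ hσ hd0 (fun _ q a _ => hu q a) i
  have hu_eq : M.stepDist σ d0 i ⬝ᵥ u =
      α * mass (M.stepDist σ d0 i) (M.exitWithin T (j + 1)) - mass (M.stepDist σ d0 i) Tᶜ := by
    simp only [u, mass_eq_dotProduct, dotProduct, mul_sub, Finset.sum_sub_distrib,
      Finset.mul_sum, mul_left_comm]
  rw [hu_eq, ← mass_eq_dotProduct] at hstep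
  linarith

lemma pow_mul_mass_exitWithin_le (h0 : 0 ≤ α) (h1 : α ≤ 1)
    (hα : ∀ q a q', 0 < M.δ q a q' → α ≤ M.δ q a q') (hσ : IsStrategy σ) (hd0 : ∀ q, 0 ≤ d0 q)
    (k t j : ℕ) :
    α ^ t * mass (M.stepDist σ d0 k) (M.exitWithin T (j + t)) ≤
      mass (M.stepDist σ d0 (k + t)) (M.exitWithin T j) +
        ∑ s ∈ Finset.range t, mass (M.stepDist σ d0 (k + s)) Tᶜ := by
  induction t generalizing j with
  | zero => simp
  | succ t ih =>
    have hS : 0 ≤ ∑ s ∈ Finset.range t, mass (M.stepDist σ d0 (k + s)) Tᶜ :=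
      Finset.sum_nonneg fun s _ => mass_nonneg (M.stepDist_nonneg hσ hd0 _) _
    have hih := mul_le_mul_of_nonneg_left (ih (j + 1)) h0
    rw [show j + 1 + t = j + (t + 1) by omega] at hih
    rw [pow_succ', mul_assoc, Finset.sum_range_succ, ← add_assoc k t 1]
    linarith [mul_mass_exitWithin_succ_le (T := T) h1 hα hσ hd0 j (k + t),
      mul_le_of_le_one_left hS h1]

lemma mul_pow_le_sum_mass_compl [Nonempty A] (h0 : 0 ≤ α) (h1 : α ≤ 1)
    (hα : ∀ q a q', 0 < M.δ q a q' → α ≤ M.δ q a q') (hσ : IsStrategy σ) (hd0 : ∀ q, 0 ≤ d0 q)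
    {q0 : Q} (hq0 : q0 ∉ M.asRegion T) (k : ℕ) :
    d0 q0 * α ^ (2 * (Fintype.card Q - 1)) ≤
      ∑ s ∈ Finset.range (Fintype.card Q), mass (M.stepDist σ d0 (k + s)) Tᶜ := by
  set m := Fintype.card Q - 1
  have hm : Fintype.card Q = m + 1 := (Nat.succ_pred_eq_of_pos (Fintype.card_pos_iff.mpr ⟨q0⟩)).symm
  have hd := M.stepDist_nonneg hσ hd0 k
  calc d0 q0 * α ^ (2 * m) = α ^ m * (d0 q0 * α ^ m) := by ring
    _ ≤ α ^ m * mass (M.stepDist σ d0 k) (M.exitWithin T (0 + m)) := by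
      gcongr
      calc d0 q0 * α ^ m ≤ mass (M.stepDist σ d0 k) (M.asRegion T)ᶜ :=
            mul_pow_le_mass_compl_asRegion h0 h1 hα hσ hd0 hq0 k
        _ ≤ mass (M.stepDist σ d0 k) (M.safeRegion T)ᶜ :=
            mass_mono hd (Set.compl_subset_compl.mpr safeRegion_subset_asRegion)
        _ ≤ _ := mass_mono hd (by simpa using compl_safeRegion_subset_exitWithin)
    _ ≤ _ := pow_mul_mass_exitWithin_le h0 h1 hα hσ hd0 k m 0
    _ = _ := by rw [hm, Finset.sum_range_succ, add_comm]; rfl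

lemma exists_lt_card_le_mass_compl [Nonempty A] (h0 : 0 ≤ α) (h1 : α ≤ 1)
    (hα : ∀ q a q', 0 < M.δ q a q' → α ≤ M.δ q a q') (hσ : IsStrategy σ) (hd0 : ∀ q, 0 ≤ d0 q)
    {q0 : Q} (hq0 : q0 ∉ M.asRegion T) (k : ℕ) :
    ∃ s < Fintype.card Q, d0 q0 * α ^ (2 * (Fintype.card Q - 1)) / Fintype.card Q ≤
      mass (M.stepDist σ d0 (k + s)) Tᶜ := by
  have hn : 0 < Fintype.card Q := Fintype.card_pos_iff.mpr ⟨q0⟩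
  have hsum : ∑ _s ∈ Finset.range (Fintype.card Q),
      d0 q0 * α ^ (2 * (Fintype.card Q - 1)) / Fintype.card Q =
        d0 q0 * α ^ (2 * (Fintype.card Q - 1)) := by
    rw [Finset.sum_const, Finset.card_range, nsmul_eq_mul]
    field_simp
  obtain ⟨s, hs, h⟩ := Finset.exists_le_of_sum_le (Finset.nonempty_range_iff.mpr hn.ne')
    (hsum.trans_le (mul_pow_le_sum_mass_compl h0 h1 hα hσ hd0 hq0 k))
  exact ⟨s, Finset.mem_range.mp hs, h⟩

/-- A progress action of minimal rank: it serves every stage of `reachIter` containing `q`. -/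
lemma exists_progress_action {q : Q} (hW : q ∈ M.asRegion T) (hS : q ∉ M.safeRegion T) :
    ∃ a, (∀ q', 0 < M.δ q a q' → q' ∈ M.asRegion T) ∧
      ∀ j, q ∈ M.reachIter T (M.asRegion T) (j + 1) →
        ∃ q', 0 < M.δ q a q' ∧ q' ∈ M.reachIter T (M.asRegion T) j := by
  set R := {r | q ∈ M.reachIter T (M.asRegion T) r}
  have hR : R.Nonempty := ⟨_, asRegion_subset_reachIter hW⟩
  obtain ⟨s, hs⟩ : ∃ s, sInf R = s + 1 := Nat.exists_eq_succ_of_ne_zero fun h0 => by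
    have := Nat.sInf_mem hR
    rw [h0] at this
    exact hS this
  have hmem : q ∈ M.reachIter T (M.asRegion T) (s + 1) := hs ▸ Nat.sInf_mem hR
  have hnot : q ∉ M.reachIter T (M.asRegion T) s := Nat.notMem_of_lt_sInf (s := R) (by omega)
  obtain ⟨a, hstay, q', hδ, hq'⟩ := hmem.resolve_left hnot
  refine ⟨a, hstay, fun j hj => ⟨q', hδ, reachIter_monotone _ ?_ hq'⟩⟩
  have : sInf R ≤ j + 1 := Nat.sInf_le hj
  omega

variable [Nonempty A]

noncomputable def winningAction (M : MDP Q A) (T : Set Q) (q : Q) : A :=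
  if hS : q ∈ M.safeRegion T then Classical.choose (safeRegion_subset_pre hS)
  else if hW : q ∈ M.asRegion T then Classical.choose (exists_progress_action hW hS)
  else Classical.arbitrary A

lemma winningAction_safe {q : Q} (hS : q ∈ M.safeRegion T) :
    ∀ q', 0 < M.δ q (M.winningAction T q) q' → q' ∈ M.safeRegion T := by
  rw [winningAction, dif_pos hS]
  exact Classical.choose_spec (safeRegion_subset_pre hS)

lemma winningAction_asRegion {q : Q} (hW : q ∈ M.asRegion T) :
    ∀ q', 0 < M.δ q (M.winningAction T q) q' → q' ∈ M.asRegion T := by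
  by_cases hS : q ∈ M.safeRegion T
  · exact fun q' hq' => safeRegion_subset_asRegion (winningAction_safe hS q' hq')
  rw [winningAction, dif_neg hS, dif_pos hW]
  exact (Classical.choose_spec (exists_progress_action hW hS)).1

lemma winningAction_progress {q : Q} (hW : q ∈ M.asRegion T) (hS : q ∉ M.safeRegion T) {j : ℕ}
    (hj : q ∈ M.reachIter T (M.asRegion T) (j + 1)) :
    ∃ q', 0 < M.δ q (M.winningAction T q) q' ∧ q' ∈ M.reachIter T (M.asRegion T) j := by
  rw [winningAction, dif_neg hS, dif_pos hW]
  exact (Classical.choose_spec (exists_progress_action hW hS)).2 j hj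

/-- The probability, playing `winningAction` from `q`, of being in `safeRegion` after `r` steps. -/
noncomputable def safeProb (M : MDP Q A) (T : Set Q) : ℕ → Q → ℝ
  | 0 => (M.safeRegion T).indicator 1
  | r + 1 => fun q => M.δ q (M.winningAction T q) ⬝ᵥ safeProb M T r

lemma safeProb_nonneg (r : ℕ) (q : Q) : 0 ≤ M.safeProb T r q := by
  induction r generalizing q with
  | zero => exact Set.indicator_nonneg (fun _ _ => zero_le_one) q
  | succ r ih => exact Finset.sum_nonneg fun q' _ => mul_nonneg (M.δ_nonneg _ _ _) (ih q')

lemma safeProb_eq_one (r : ℕ) {q : Q} (hq : q ∈ M.safeRegion T) : M.safeProb T r q = 1 := by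
  induction r generalizing q with
  | zero => simp [safeProb, hq]
  | succ r ih =>
    calc M.safeProb T (r + 1) q = ∑ q', M.δ q (M.winningAction T q) q' * 1 :=
          Finset.sum_congr rfl fun q' _ => by
            rcases (M.δ_nonneg q (M.winningAction T q) q').eq_or_lt with hδ | hδ
            · simp [← hδ]
            · rw [ih (winningAction_safe hq q' hδ)]
      _ = 1 := by rw [← Finset.sum_mul, M.δ_sum, one_mul]

lemma safeProb_le_succ (r : ℕ) (q : Q) : M.safeProb T r q ≤ M.safeProb T (r + 1) q := by
  induction r generalizing q with
  | zero =>
    by_cases hq : q ∈ M.safeRegion T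
    · rw [safeProb_eq_one 0 hq, safeProb_eq_one 1 hq]
    · simpa [safeProb, hq] using safeProb_nonneg 1 q
  | succ r ih =>
    exact Finset.sum_le_sum fun q' _ => mul_le_mul_of_nonneg_left (ih q') (M.δ_nonneg _ _ _)

lemma safeProb_mono {r s : ℕ} (h : r ≤ s) (q : Q) : M.safeProb T r q ≤ M.safeProb T s q :=
  monotone_nat_of_le_succ (f := fun r => M.safeProb T r q) (fun r => safeProb_le_succ r q) h

lemma one_sub_safeProb_add_le (h0 : 0 ≤ α) (h1 : α ≤ 1)
    (hα : ∀ q a q', 0 < M.δ q a q' → α ≤ M.δ q a q') {r : ℕ} {m : ℝ} (hm : 0 ≤ m)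
    (hbase : ∀ q ∈ M.asRegion T, 1 - M.safeProb T r q ≤ m) (j : ℕ) {q : Q}
    (hW : q ∈ M.asRegion T) (hq : q ∈ M.reachIter T (M.asRegion T) j) :
    1 - M.safeProb T (r + j) q ≤ (1 - α ^ j) * m := by
  induction j generalizing q with
  | zero => simp [safeProb_eq_one _ hq]
  | succ j ih =>
    have hαj : α ^ (j + 1) ≤ 1 := pow_le_one₀ h0 h1
    by_cases hS : q ∈ M.safeRegion T
    · rw [safeProb_eq_one _ hS, sub_self]
      exact mul_nonneg (by linarith) hm
    set a := M.winningAction T q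
    obtain ⟨q'', hδ'', hq''⟩ := winningAction_progress hW hS hq
    -- every successor fails with probability at most `m`, and `q''` with at most `(1 - α^j) m`
    have hterm : ∀ q', M.δ q a q' * (1 - M.safeProb T (r + j) q') ≤
        M.δ q a q' * (m - if q' = q'' then α ^ j * m else 0) := fun q' => by
      rcases (M.δ_nonneg q a q').eq_or_lt with hδ | hδ
      · simp [← hδ]
      refine mul_le_mul_of_nonneg_left ?_ hδ.le
      have hW' := winningAction_asRegion hW q' hδ
      split_ifs with hq'
      · subst hq'
        linarith [ih hW' hq'']
      · linarith [hbase q' hW', safeProb_mono (M := M) (T := T) (Nat.le_add_right r j) q']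
    have hsum : 1 - M.safeProb T (r + (j + 1)) q =
        ∑ q', M.δ q a q' * (1 - M.safeProb T (r + j) q') := by
      rw [← add_assoc]
      simp only [safeProb, dotProduct, mul_sub, mul_one, Finset.sum_sub_distrib, M.δ_sum, a]
    calc 1 - M.safeProb T (r + (j + 1)) q
        ≤ ∑ q', M.δ q a q' * (m - if q' = q'' then α ^ j * m else 0) :=
          hsum ▸ Finset.sum_le_sum fun q' _ => hterm q'
      _ = m - M.δ q a q'' * (α ^ j * m) := by
          simp [mul_sub, Finset.sum_sub_distrib, ← Finset.sum_mul, M.δ_sum]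
      _ ≤ m - α * (α ^ j * m) := by
          gcongr
          exact hα q a q'' hδ''
      _ = (1 - α ^ (j + 1)) * m := by ring

lemma one_sub_safeProb_le_pow (h0 : 0 ≤ α) (h1 : α ≤ 1)
    (hα : ∀ q a q', 0 < M.δ q a q' → α ≤ M.δ q a q') (k : ℕ) {q : Q} (hW : q ∈ M.asRegion T) :
    1 - M.safeProb T (k * Fintype.card Q) q ≤ (1 - α ^ Fintype.card Q) ^ k := by
  induction k generalizing q with
  | zero => simpa using safeProb_nonneg 0 q
  | succ k ih =>
    have hβ : 0 ≤ 1 - α ^ Fintype.card Q := sub_nonneg.mpr (pow_le_one₀ h0 h1)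
    rw [add_mul, one_mul, pow_succ']
    exact one_sub_safeProb_add_le h0 h1 hα (pow_nonneg hβ k) (fun q hq => ih hq) _ hW
      (asRegion_subset_reachIter hW)

lemma dotProduct_safeProb_le_mass (hd0 : ∀ q, 0 ≤ d0 q) (i : ℕ) :
    d0 ⬝ᵥ M.safeProb T i ≤ mass (M.stepDist (pureStrategy (M.winningAction T)) d0 i) T := by
  have hpush := M.dotProduct_le_stepDist_dotProduct (isStrategy_pureStrategy _) hd0
    (u := fun t => M.safeProb T (i - t)) (i := i) fun t ht h q a ha => by
      rw [eq_of_pureStrategy_pos ha, show i - t = i - (t + 1) + 1 by omega]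
      exact le_rfl
  simp only [Nat.sub_zero, Nat.sub_self] at hpush
  refine hpush.trans ?_
  rw [mass_eq_dotProduct]
  exact Finset.sum_le_sum fun q _ => mul_le_mul_of_nonneg_left
    (Set.indicator_le_indicator_of_subset safeRegion_subset (fun _ => zero_le_one) q)
    (M.stepDist_nonneg (isStrategy_pureStrategy _) hd0 i q)

lemma asStrongly_of_support_subset (hpos : 0 < α) (h1 : α ≤ 1)
    (hα : ∀ q a q', 0 < M.δ q a q' → α ≤ M.δ q a q') (hd0 : IsDist d0)
    (hsupp : ∀ q, 0 < d0 q → q ∈ M.asRegion T) : M.ASStrongly d0 T := by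
  refine ⟨_, isStrategy_pureStrategy (M.winningAction T), fun ε hε => ?_⟩
  obtain ⟨k, hk⟩ := exists_pow_lt_of_lt_one hε
    (show 1 - α ^ Fintype.card Q < 1 by linarith [pow_pos hpos (Fintype.card Q)])
  refine ⟨k * Fintype.card Q, fun i hi => ?_⟩
  calc 1 - ε = ∑ q, d0 q * (1 - ε) := by rw [← Finset.sum_mul, hd0.2, one_mul]
    _ ≤ d0 ⬝ᵥ M.safeProb T i := Finset.sum_le_sum fun q _ => by
        rcases (hd0.1 q).eq_or_lt with hq | hq
        · simp [← hq]
        refine mul_le_mul_of_nonneg_left ?_ hq.le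
        linarith [one_sub_safeProb_le_pow hpos.le h1 hα k (hsupp q hq),
          safeProb_mono (M := M) (T := T) hi q]
    _ ≤ _ := dotProduct_safeProb_le_mass hd0.1 i

end MDP

open MDP in
/-- If `d0` is not almost-sure strongly synchronizing in `T`, then for every
strategy there are infinitely many positions `i_0 < i_1 < ⋯` with `i_0 ≤ n` and
`i_{j+1} - i_j ≤ n`, at which `M^σ_{i_j}(T) ≤ 1 - ε_s`, with
`ε_s = α0 * α^(2n) / n²`. -/
theorem stmt9 {Q A : Type} [Fintype Q] [Fintype A] (M : MDP Q A)
    (d0 : Q → ℝ) (hd0 : IsDist d0) (T : Set Q) (α α0 : ℝ)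
    (hα : IsLeast {x : ℝ | 0 < x ∧ ∃ q a q', M.δ q a q' = x} α)
    (hα0 : IsLeast {x : ℝ | 0 < x ∧ ∃ q, d0 q = x} α0)
    (h : ¬ M.ASStrongly d0 T) :
    ∀ σ, IsStrategy σ → ∃ f : ℕ → ℕ, StrictMono f ∧ f 0 ≤ Fintype.card Q ∧
      (∀ j, f (j + 1) - f j ≤ Fintype.card Q) ∧
      ∀ j, mass (M.stepDist σ d0 (f j)) T ≤
        1 - α0 * α ^ (2 * Fintype.card Q) / (Fintype.card Q : ℝ) ^ 2 := by
  intro σ hσ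
  obtain ⟨hpos, q, a, q', hαqaq'⟩ := hα.1
  have : Nonempty A := ⟨a⟩
  have h1 : α ≤ 1 := hαqaq' ▸ M.δ_le_one q a q'
  have hδ : ∀ q a q', 0 < M.δ q a q' → α ≤ M.δ q a q' := fun q a q' hq => hα.2 ⟨hq, q, a, q', rfl⟩
  obtain ⟨q0, hq0, hq0W⟩ : ∃ q0, 0 < d0 q0 ∧ q0 ∉ M.asRegion T := by
    by_contra! hsupp
    exact h (asStrongly_of_support_subset hpos h1 hδ hd0 hsupp)
  set n := Fintype.card Q
  set ε := α0 * α ^ (2 * n) / (n : ℝ) ^ 2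
  have hε : ε ≤ d0 q0 * α ^ (2 * (n - 1)) / n := by
    have hn : (1 : ℝ) ≤ n := Nat.one_le_cast.mpr (Fintype.card_pos_iff.mpr ⟨q0⟩)
    calc ε ≤ α0 * α ^ (2 * n) / n :=
          div_le_div_of_nonneg_left (mul_nonneg hα0.1.1.le (pow_nonneg hpos.le _)) (by positivity)
            (by nlinarith)
      _ ≤ d0 q0 * α ^ (2 * (n - 1)) / n := div_le_div_of_nonneg_right
          (mul_le_mul (hα0.2 ⟨hq0, q0, rfl⟩) (pow_le_pow_of_le_one hpos.le h1 (by omega))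
            (by positivity) hq0.le) (by positivity)
  obtain ⟨f, hf, hf0, hgap, hmass⟩ := exists_strictMono_of_forall_exists_lt
    (P := fun i => ε ≤ mass (M.stepDist σ d0 i) Tᶜ) fun k =>
      (exists_lt_card_le_mass_compl hpos.le h1 hδ hσ hd0.1 hq0W k).imp fun _ hs =>
        ⟨hs.1, hε.trans hs.2⟩
  refine ⟨f, hf, hf0.le, hgap, fun j => ?_⟩
  linarith [mass_add_mass_compl (M.stepDist σ d0 (f j)) T, M.sum_stepDist hσ hd0 (f j), hmass j]
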